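/- arXiv:1804.08814 — 4 statements merged into one kernel-verified Lean document; each statement's English description precedes it below -/
import Mathlib

section
/- For γ > 1, the function g₁(w) = ρ·s(w) = ρ·log(p(w)/ρ^γ) is strictly concave on the open convex set D = {(ρ, m, E) ∈ ℝ³ : ρ > 0, p(w) > 0}. -/
open Real MeasureTheory

/-- Pressure of a state `w = (ρ, m, E)` for adiabatic exponent `γ`:
`p(w) = (γ − 1)(E − m²/(2ρ))`. -/
noncomputable def press (γ : ℝ) (w : ℝ × ℝ × ℝ) : ℝ :=
  (γ - 1) * (w.2.2 - w.2.1 ^ 2 / (2 * w.1))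

/-- Specific entropy `s(w) = log(p(w)/ρ^γ)`. -/
noncomputable def entr (γ : ℝ) (w : ℝ × ℝ × ℝ) : ℝ :=
  Real.log (press γ w / w.1 ^ γ)

/-- `q(w) = (s₀ − s(w))·ρ`. -/
noncomputable def qf (γ s₀ : ℝ) (w : ℝ × ℝ × ℝ) : ℝ :=
  (s₀ - entr γ w) * w.1

/-!
Write `ρ s(w) = φ (ρ, p(w))` with `φ (ρ, p) = ρ log (p / ρ ^ γ) = ρ log (p / ρ) - (γ - 1) ρ log ρ`.
By the log-sum inequality the perspective `ρ log (p / ρ)` of `log` is concave on the open quadrant,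
strictly so between points with different ratios `p / ρ`, and `ρ log ρ` is strictly convex; hence
`φ` is strictly concave. Moreover `φ` is increasing in `p`, while `p` is concave on `ρ > 0`: its
concavity defect is `γ - 1` times the convexity defect of the kinetic energy `m² / (2ρ)`, which is
positive unless the velocities `m / ρ` agree. Equality in both steps forces the two states to have
the same `ρ`, `p` and `m`, hence the same `E`.
-/

open Set

section LogSum

variable {x₀ x₁ y₀ y₁ : ℝ}

theorem add_mul_log_div_lt (hx₀ : 0 < x₀) (hx₁ : 0 < x₁) (hy₀ : 0 < y₀) (hy₁ : 0 < y₁)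
    (h : y₀ / x₀ ≠ y₁ / x₁) :
    x₀ * log (y₀ / x₀) + x₁ * log (y₁ / x₁) < (x₀ + x₁) * log ((y₀ + y₁) / (x₀ + x₁)) := by
  have hs : 0 < x₀ + x₁ := add_pos hx₀ hx₁
  have hconc := strictConcaveOn_log_Ioi.2 (mem_Ioi.2 (div_pos hy₀ hx₀))
    (mem_Ioi.2 (div_pos hy₁ hx₁)) h (div_pos hx₀ hs) (div_pos hx₁ hs)
    (by rw [← add_div, div_self hs.ne'])
  calc x₀ * log (y₀ / x₀) + x₁ * log (y₁ / x₁)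
      = (x₀ + x₁) * ((x₀ / (x₀ + x₁)) • log (y₀ / x₀) + (x₁ / (x₀ + x₁)) • log (y₁ / x₁)) := by
        simp only [smul_eq_mul]; field_simp
    _ < (x₀ + x₁) * log ((x₀ / (x₀ + x₁)) • (y₀ / x₀) + (x₁ / (x₀ + x₁)) • (y₁ / x₁)) :=
        mul_lt_mul_of_pos_left hconc hs
    _ = (x₀ + x₁) * log ((y₀ + y₁) / (x₀ + x₁)) := by
        simp only [smul_eq_mul]; congr 2; field_simp

theorem add_mul_log_div_le (hx₀ : 0 < x₀) (hx₁ : 0 < x₁) (hy₀ : 0 < y₀) (hy₁ : 0 < y₁) :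
    x₀ * log (y₀ / x₀) + x₁ * log (y₁ / x₁) ≤ (x₀ + x₁) * log ((y₀ + y₁) / (x₀ + x₁)) := by
  rcases ne_or_eq (y₀ / x₀) (y₁ / x₁) with h | h
  · exact (add_mul_log_div_lt hx₀ hx₁ hy₀ hy₁ h).le
  · have hratio : (y₀ + y₁) / (x₀ + x₁) = y₀ / x₀ := by
      field_simp at h ⊢
      linarith
    rw [hratio, ← h]
    exact (add_mul _ _ _).ge

end LogSum

section EntropyDensity

variable {γ ρ p : ℝ}

theorem mul_log_div_rpow_eq (hρ : 0 < ρ) (hp : p ≠ 0) :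
    ρ * log (p / ρ ^ γ) = ρ * log (p / ρ) - (γ - 1) * (ρ * log ρ) := by
  rw [log_div hp (rpow_pos_of_pos hρ γ).ne', log_rpow hρ, log_div hp hρ.ne']
  ring

theorem strictMonoOn_mul_log_div_rpow (hρ : 0 < ρ) :
    StrictMonoOn (fun p => ρ * log (p / ρ ^ γ)) (Ioi 0) := fun _ hp _ _ hpq =>
  mul_lt_mul_of_pos_left
    (log_lt_log (div_pos hp (rpow_pos_of_pos hρ γ))
      (div_lt_div_of_pos_right hpq (rpow_pos_of_pos hρ γ))) hρ

theorem strictConcaveOn_mul_log_div_rpow (hγ : 1 < γ) :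
    StrictConcaveOn ℝ (Ioi 0 ×ˢ Ioi 0) (fun x : ℝ × ℝ => x.1 * log (x.2 / x.1 ^ γ)) := by
  refine ⟨(convex_Ioi 0).prod (convex_Ioi 0), ?_⟩
  rintro ⟨ρ₀, p₀⟩ ⟨hρ₀, hp₀⟩ ⟨ρ₁, p₁⟩ ⟨hρ₁, hp₁⟩ hne a b ha hb hab
  simp only [mem_Ioi, Prod.smul_mk, Prod.mk_add_mk, smul_eq_mul] at *
  have hρ : 0 < a * ρ₀ + b * ρ₁ := by positivity
  have hp : 0 < a * p₀ + b * p₁ := by positivity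
  rw [mul_log_div_rpow_eq hρ₀ hp₀.ne', mul_log_div_rpow_eq hρ₁ hp₁.ne',
    mul_log_div_rpow_eq hρ hp.ne']
  have hscale : ∀ {c x y : ℝ}, 0 < c → c * x * log (c * y / (c * x)) = c * (x * log (y / x)) :=
    fun hc => by rw [mul_div_mul_left _ _ hc.ne', mul_assoc]
  have hγ₁ : 0 < γ - 1 := sub_pos.2 hγ
  rcases eq_or_ne ρ₀ ρ₁ with rfl | hρne
  · have hratio : a * p₀ / (a * ρ₀) ≠ b * p₁ / (b * ρ₀) := by
      rw [mul_div_mul_left _ _ ha.ne', mul_div_mul_left _ _ hb.ne']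
      exact fun h => hne (by rw [div_left_inj' hρ₀.ne'] at h; rw [h])
    have hlogsum := add_mul_log_div_lt (mul_pos ha hρ₀) (mul_pos hb hρ₀) (mul_pos ha hp₀)
      (mul_pos hb hp₁) hratio
    rw [hscale ha, hscale hb] at hlogsum
    have hxlogx := convexOn_mul_log.2 (mem_Ici.2 hρ₀.le) (mem_Ici.2 hρ₀.le) ha.le hb.le hab
    simp only [smul_eq_mul] at hxlogx
    linarith [mul_le_mul_of_nonneg_left hxlogx hγ₁.le]
  · have hlogsum := add_mul_log_div_le (mul_pos ha hρ₀) (mul_pos hb hρ₁) (mul_pos ha hp₀)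
      (mul_pos hb hp₁)
    rw [hscale ha, hscale hb] at hlogsum
    have hxlogx := strictConvexOn_mul_log.2 (mem_Ici.2 hρ₀.le) (mem_Ici.2 hρ₁.le) hρne ha hb hab
    simp only [smul_eq_mul] at hxlogx
    linarith [mul_lt_mul_of_pos_left hxlogx hγ₁]

end EntropyDensity

section Pressure

variable {γ a b : ℝ} {w₀ w₁ : ℝ × ℝ × ℝ}

theorem press_smul_add_smul (h₀ : w₀.1 ≠ 0) (h₁ : w₁.1 ≠ 0) (h : a * w₀.1 + b * w₁.1 ≠ 0) :
    press γ (a • w₀ + b • w₁) = a * press γ w₀ + b * press γ w₁ +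
      (γ - 1) * (a * b * (w₀.2.1 * w₁.1 - w₁.2.1 * w₀.1) ^ 2 /
        (2 * w₀.1 * w₁.1 * (a * w₀.1 + b * w₁.1))) := by
  simp only [press, Prod.fst_add, Prod.snd_add, Prod.smul_fst, Prod.smul_snd, smul_eq_mul] at *
  field_simp
  ring

theorem add_press_le_press_smul_add_smul (hγ : 1 ≤ γ) (h₀ : 0 < w₀.1) (h₁ : 0 < w₁.1)
    (ha : 0 ≤ a) (hb : 0 ≤ b) (h : 0 < a * w₀.1 + b * w₁.1) :
    a * press γ w₀ + b * press γ w₁ ≤ press γ (a • w₀ + b • w₁) := by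
  rw [press_smul_add_smul h₀.ne' h₁.ne' h.ne']
  have hdefect : 0 ≤ a * b * (w₀.2.1 * w₁.1 - w₁.2.1 * w₀.1) ^ 2 /
      (2 * w₀.1 * w₁.1 * (a * w₀.1 + b * w₁.1)) := by
    positivity
  exact le_add_of_nonneg_right (mul_nonneg (sub_nonneg.2 hγ) hdefect)

theorem add_press_lt_press_smul_add_smul (hγ : 1 < γ) (h₀ : 0 < w₀.1) (h₁ : 0 < w₁.1)
    (ha : 0 < a) (hb : 0 < b) (hm : w₀.2.1 * w₁.1 ≠ w₁.2.1 * w₀.1) :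
    a * press γ w₀ + b * press γ w₁ < press γ (a • w₀ + b • w₁) := by
  have h : 0 < a * w₀.1 + b * w₁.1 := by positivity
  rw [press_smul_add_smul h₀.ne' h₁.ne' h.ne']
  have hcross : w₀.2.1 * w₁.1 - w₁.2.1 * w₀.1 ≠ 0 := sub_ne_zero.2 hm
  have hdefect : 0 < a * b * (w₀.2.1 * w₁.1 - w₁.2.1 * w₀.1) ^ 2 /
      (2 * w₀.1 * w₁.1 * (a * w₀.1 + b * w₁.1)) := by
    positivity
  exact lt_add_of_pos_right _ (mul_pos (sub_pos.2 hγ) hdefect)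

theorem eq_of_press_eq (hγ : γ ≠ 1) (hρ : w₀.1 = w₁.1) (hm : w₀.2.1 = w₁.2.1)
    (hp : press γ w₀ = press γ w₁) : w₀ = w₁ := by
  obtain ⟨ρ₀, m₀, E₀⟩ := w₀
  obtain ⟨ρ₁, m₁, E₁⟩ := w₁
  simp only [press] at *
  subst hρ hm
  rw [mul_right_inj' (sub_ne_zero.2 hγ), sub_left_inj] at hp
  rw [hp]

theorem convex_setOf_pos_press (hγ : 1 ≤ γ) :
    Convex ℝ {w : ℝ × ℝ × ℝ | 0 < w.1 ∧ 0 < press γ w} := by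
  rintro w₀ ⟨hρ₀, hp₀⟩ w₁ ⟨hρ₁, hp₁⟩ a b ha hb hab
  have hρ : 0 < a * w₀.1 + b * w₁.1 := convex_Ioi (0 : ℝ) hρ₀ hρ₁ ha hb hab
  exact ⟨hρ, (convex_Ioi (0 : ℝ) hp₀ hp₁ ha hb hab).trans_le
    (add_press_le_press_smul_add_smul hγ hρ₀ hρ₁ ha hb hρ)⟩

end Pressure

/-- For `γ > 1`, the function `g₁(w) = ρ·s(w) = ρ·log(p(w)/ρ^γ)` is strictly
concave on the open convex set `D = {(ρ, m, E) : ρ > 0, p(w) > 0}`. -/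
theorem rho_entropy_strictConcave (γ : ℝ) (hγ : 1 < γ) :
    StrictConcaveOn ℝ {w : ℝ × ℝ × ℝ | 0 < w.1 ∧ 0 < press γ w}
      (fun w => w.1 * entr γ w) := by
  refine ⟨convex_setOf_pos_press hγ.le, ?_⟩
  rintro w₀ ⟨hρ₀, hp₀⟩ w₁ ⟨hρ₁, hp₁⟩ hne a b ha hb hab
  have hφ := strictConcaveOn_mul_log_div_rpow hγ
  set ρ := a * w₀.1 + b * w₁.1
  set P := a * press γ w₀ + b * press γ w₁
  have hρ : 0 < ρ := by positivity
  have hP : 0 < P := by positivity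
  have hmono := strictMonoOn_mul_log_div_rpow (γ := γ) hρ
  have hx₀ : (w₀.1, press γ w₀) ∈ Ioi 0 ×ˢ Ioi 0 := ⟨hρ₀, hp₀⟩
  have hx₁ : (w₁.1, press γ w₁) ∈ Ioi 0 ×ˢ Ioi 0 := ⟨hρ₁, hp₁⟩
  show a * (w₀.1 * log (press γ w₀ / w₀.1 ^ γ)) + b * (w₁.1 * log (press γ w₁ / w₁.1 ^ γ)) <
    ρ * log (press γ (a • w₀ + b • w₁) / ρ ^ γ)
  by_cases hx : (w₀.1, press γ w₀) = (w₁.1, press γ w₁)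
  · obtain ⟨hρeq, hpeq⟩ := Prod.ext_iff.1 hx
    have hm : w₀.2.1 * w₁.1 ≠ w₁.2.1 * w₀.1 := fun hm => hne <|
      eq_of_press_eq hγ.ne' hρeq (mul_right_cancel₀ hρ₁.ne' (hρeq ▸ hm)) hpeq
    have hlt := add_press_lt_press_smul_add_smul hγ hρ₀ hρ₁ ha hb hm
    calc _ ≤ ρ * log (P / ρ ^ γ) := hφ.concaveOn.2 hx₀ hx₁ ha.le hb.le hab
      _ < _ := hmono hP (hP.trans hlt) hlt
  · have hle := add_press_le_press_smul_add_smul hγ.le hρ₀ hρ₁ ha.le hb.le hρ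
    calc _ < ρ * log (P / ρ ^ γ) := hφ.2 hx₀ hx₁ hx ha hb hab
      _ ≤ _ := hmono.monotoneOn hP (hP.trans_le hle) hle
end

section
/- For γ > 1 and any constant s₀ ∈ ℝ, the function q(w) = (s₀ − s(w))·ρ is strictly convex on the open convex set D = {(ρ, m, E) ∈ ℝ³ : ρ > 0, p(w) > 0}. -/
/-!
On the domain, `p = (γ - 1) e` with `e = E - m² / (2ρ)` the internal energy, so
`q = (s₀ - log (γ - 1)) ρ + g (ρ, e)` with `g (ρ, e) = γ ρ log ρ - ρ log e`. The internal energy is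
concave in `w`, with concavity defect a multiple of `(ρ₂ m₁ - ρ₁ m₂)²`. Writing
`g (ρ, e) = (γ - 1) ρ log ρ + ρ · (-log (e / ρ))` splits `g` into a function strictly convex in `ρ`
and the perspective of `-log`, which is strictly convex across rays; hence `g` is strictly convex on
`(0, ∞)²`, and it is decreasing in `e`. So `q` is convex, and strictly so: if two distinct states
have the same `(ρ, e)`, their momenta differ and the concavity defect of `e` is positive.
-/

open Real MeasureTheory

open Set

section Perspective

variable {s : Set ℝ} {h : ℝ → ℝ} {ρ₁ ρ₂ u₁ u₂ a b : ℝ}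

-- With `R = a ρ₁ + b ρ₂`, the weights `a ρ₁ / R` and `b ρ₂ / R` turn the perspective inequality
-- into the convexity inequality of `h`.
private lemma perspective_weights (hρ₁ : 0 < ρ₁) (hρ₂ : 0 < ρ₂) (ha : 0 < a) (hb : 0 < b) :
    a * ρ₁ / (a * ρ₁ + b * ρ₂) + b * ρ₂ / (a * ρ₁ + b * ρ₂) = 1 ∧
    a * ρ₁ / (a * ρ₁ + b * ρ₂) * (u₁ / ρ₁) + b * ρ₂ / (a * ρ₁ + b * ρ₂) * (u₂ / ρ₂) =
      (a * u₁ + b * u₂) / (a * ρ₁ + b * ρ₂) ∧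
    (a * ρ₁ + b * ρ₂) * (a * ρ₁ / (a * ρ₁ + b * ρ₂) * h (u₁ / ρ₁)
      + b * ρ₂ / (a * ρ₁ + b * ρ₂) * h (u₂ / ρ₂)) =
      a * (ρ₁ * h (u₁ / ρ₁)) + b * (ρ₂ * h (u₂ / ρ₂)) := by
  have hR : 0 < a * ρ₁ + b * ρ₂ := by positivity
  refine ⟨?_, ?_, ?_⟩ <;> field_simp

theorem ConvexOn.perspective_le (hh : ConvexOn ℝ s h) (hρ₁ : 0 < ρ₁) (hρ₂ : 0 < ρ₂)
    (hu₁ : u₁ / ρ₁ ∈ s) (hu₂ : u₂ / ρ₂ ∈ s) (ha : 0 < a) (hb : 0 < b) :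
    (a * ρ₁ + b * ρ₂) * h ((a * u₁ + b * u₂) / (a * ρ₁ + b * ρ₂)) ≤
      a * (ρ₁ * h (u₁ / ρ₁)) + b * (ρ₂ * h (u₂ / ρ₂)) := by
  obtain ⟨hsum, hmid, hval⟩ := perspective_weights (h := h) (u₁ := u₁) (u₂ := u₂) hρ₁ hρ₂ ha hb
  have := hh.2 hu₁ hu₂ (by positivity) (by positivity) hsum
  rw [smul_eq_mul, smul_eq_mul, hmid, smul_eq_mul, smul_eq_mul] at this
  rw [← hval]
  exact mul_le_mul_of_nonneg_left this (by positivity)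

theorem StrictConvexOn.perspective_lt (hh : StrictConvexOn ℝ s h) (hρ₁ : 0 < ρ₁) (hρ₂ : 0 < ρ₂)
    (hu₁ : u₁ / ρ₁ ∈ s) (hu₂ : u₂ / ρ₂ ∈ s) (hne : u₁ / ρ₁ ≠ u₂ / ρ₂) (ha : 0 < a) (hb : 0 < b) :
    (a * ρ₁ + b * ρ₂) * h ((a * u₁ + b * u₂) / (a * ρ₁ + b * ρ₂)) <
      a * (ρ₁ * h (u₁ / ρ₁)) + b * (ρ₂ * h (u₂ / ρ₂)) := by
  obtain ⟨hsum, hmid, hval⟩ := perspective_weights (h := h) (u₁ := u₁) (u₂ := u₂) hρ₁ hρ₂ ha hb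
  have := hh.2 hu₁ hu₂ hne (by positivity) (by positivity) hsum
  rw [smul_eq_mul, smul_eq_mul, hmid, smul_eq_mul, smul_eq_mul] at this
  rw [← hval]
  exact mul_lt_mul_of_pos_left this (by positivity)

end Perspective

lemma mul_log_sub_mul_log_eq (γ : ℝ) {ρ u : ℝ} (hρ : 0 < ρ) (hu : 0 < u) :
    γ * (ρ * log ρ) - ρ * log u = (γ - 1) * (ρ * log ρ) + ρ * -log (u / ρ) := by
  rw [log_div hu.ne' hρ.ne']
  ring

theorem strictConvexOn_mul_log_sub_mul_log {γ : ℝ} (hγ : 1 < γ) :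
    StrictConvexOn ℝ (Ioi 0 ×ˢ Ioi 0) fun v : ℝ × ℝ => γ * (v.1 * log v.1) - v.1 * log v.2 := by
  refine ⟨convex_Ioi 0 |>.prod (convex_Ioi 0), ?_⟩
  rintro ⟨ρ₁, u₁⟩ ⟨hρ₁, hu₁⟩ ⟨ρ₂, u₂⟩ ⟨hρ₂, hu₂⟩ hne a b ha hb hab
  simp only [mem_Ioi] at hρ₁ hu₁ hρ₂ hu₂
  simp only [Prod.smul_mk, Prod.mk_add_mk, smul_eq_mul]
  have hlog : StrictConvexOn ℝ (Ioi 0) fun t => -log t := strictConcaveOn_log_Ioi.neg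
  have hu₁' : u₁ / ρ₁ ∈ Ioi 0 := div_pos hu₁ hρ₁
  have hu₂' : u₂ / ρ₂ ∈ Ioi 0 := div_pos hu₂ hρ₂
  rw [mul_log_sub_mul_log_eq γ hρ₁ hu₁, mul_log_sub_mul_log_eq γ hρ₂ hu₂,
    mul_log_sub_mul_log_eq γ (by positivity) (by positivity)]
  have hmul := strictConvexOn_mul_log.subset (Ioi_subset_Ici le_rfl) (convex_Ioi 0)
  have hγ' : 0 < γ - 1 := by linarith
  by_cases hρ : ρ₁ = ρ₂
  · subst hρ
    have hratio : u₁ / ρ₁ ≠ u₂ / ρ₁ := fun h => hne (by rw [div_left_inj' hρ₁.ne'] at h; rw [h])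
    have hpersp := hlog.perspective_lt hρ₁ hρ₁ hu₁' hu₂' hratio ha hb
    have hρlogρ := hmul.convexOn.2 hρ₁ hρ₁ ha.le hb.le hab
    simp only [smul_eq_mul] at hρlogρ
    linarith [mul_le_mul_of_nonneg_left hρlogρ hγ'.le]
  · have hpersp := hlog.convexOn.perspective_le hρ₁ hρ₂ hu₁' hu₂' ha hb
    have hρlogρ := hmul.2 hρ₁ hρ₂ hρ ha hb hab
    simp only [smul_eq_mul] at hρlogρ
    linarith [mul_lt_mul_of_pos_left hρlogρ hγ']

noncomputable def internalEnergy (w : ℝ × ℝ × ℝ) : ℝ :=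
  w.2.2 - w.2.1 ^ 2 / (2 * w.1)

lemma press_eq_mul_internalEnergy (γ : ℝ) (w : ℝ × ℝ × ℝ) :
    press γ w = (γ - 1) * internalEnergy w :=
  rfl

lemma internalEnergy_add_smul {x y : ℝ × ℝ × ℝ} {a b : ℝ} (hx : x.1 ≠ 0) (hy : y.1 ≠ 0)
    (hxy : a * x.1 + b * y.1 ≠ 0) :
    internalEnergy (a • x + b • y) = a * internalEnergy x + b * internalEnergy y
      + a * b * (y.1 * x.2.1 - x.1 * y.2.1) ^ 2 / (2 * x.1 * y.1 * (a * x.1 + b * y.1)) := by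
  simp only [internalEnergy, Prod.fst_add, Prod.snd_add, Prod.smul_fst, Prod.smul_snd,
    smul_eq_mul]
  field_simp
  ring

theorem concaveOn_internalEnergy : ConcaveOn ℝ {w : ℝ × ℝ × ℝ | 0 < w.1} internalEnergy := by
  refine ⟨convex_halfSpace_gt (LinearMap.fst ℝ ℝ (ℝ × ℝ)).isLinear 0,
    fun x (hx : 0 < x.1) y (hy : 0 < y.1) a b ha hb hab => ?_⟩
  rcases ha.eq_or_lt with rfl | ha
  · obtain rfl : b = 1 := by simpa using hab
    simp
  rcases hb.eq_or_lt with rfl | hb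
  · obtain rfl : a = 1 := by simpa using hab
    simp
  rw [internalEnergy_add_smul hx.ne' hy.ne' (by positivity), smul_eq_mul, smul_eq_mul]
  have : 0 ≤ a * b * (y.1 * x.2.1 - x.1 * y.2.1) ^ 2 / (2 * x.1 * y.1 * (a * x.1 + b * y.1)) := by
    positivity
  linarith

lemma internalEnergy_lt_add_smul {x y : ℝ × ℝ × ℝ} {a b : ℝ} (hx : 0 < x.1) (hy : 0 < y.1)
    (ha : 0 < a) (hb : 0 < b) (hρ : x.1 = y.1) (hm : x.2.1 ≠ y.2.1) :
    a * internalEnergy x + b * internalEnergy y < internalEnergy (a • x + b • y) := by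
  rw [internalEnergy_add_smul hx.ne' hy.ne' (by positivity), lt_add_iff_pos_right]
  have : y.1 * x.2.1 - x.1 * y.2.1 ≠ 0 := by
    rw [hρ, ← mul_sub]; exact mul_ne_zero hy.ne' (sub_ne_zero.2 hm)
  positivity

theorem strictConvexOn_mul_log_sub_mul_log_internalEnergy {γ : ℝ} (hγ : 1 < γ) :
    StrictConvexOn ℝ {w : ℝ × ℝ × ℝ | 0 < w.1 ∧ 0 < internalEnergy w}
      fun w => γ * (w.1 * log w.1) - w.1 * log (internalEnergy w) := by
  refine ⟨concaveOn_internalEnergy.convex_gt 0, ?_⟩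
  rintro x ⟨hx, hex⟩ y ⟨hy, hey⟩ hne a b ha hb hab
  set g : ℝ × ℝ → ℝ := fun v => γ * (v.1 * log v.1) - v.1 * log v.2
  set z := a • x + b • y
  set e := a * internalEnergy x + b * internalEnergy y
  have hg := strictConvexOn_mul_log_sub_mul_log hγ
  have hvx : (x.1, internalEnergy x) ∈ Ioi (0 : ℝ) ×ˢ Ioi 0 := ⟨hx, hex⟩
  have hvy : (y.1, internalEnergy y) ∈ Ioi (0 : ℝ) ×ˢ Ioi 0 := ⟨hy, hey⟩
  have hcomb : a • (x.1, internalEnergy x) + b • (y.1, internalEnergy y) = (z.1, e) := by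
    simp [z, e]
  have hz : 0 < z.1 := by simp only [z, Prod.fst_add, Prod.smul_fst, smul_eq_mul]; positivity
  have he : 0 < e := by positivity
  have hez : e ≤ internalEnergy z := concaveOn_internalEnergy.2 hx hy ha.le hb.le hab
  -- `g (z.1, ·)` is antitone and `e ≤ internalEnergy z`, so we pass through `g (z.1, e)`; the first
  -- step is strict when the endpoints differ only in momentum, the second one otherwise.
  show g (z.1, internalEnergy z) < a • g (x.1, internalEnergy x) + b • g (y.1, internalEnergy y)
  by_cases hv : (x.1, internalEnergy x) = (y.1, internalEnergy y)
  · obtain ⟨hρ, hE⟩ := Prod.mk.inj hv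
    have hm : x.2.1 ≠ y.2.1 := fun hm => hne <| Prod.ext hρ <| Prod.ext hm <| by
      simpa [internalEnergy, hρ, hm] using hE
    have hlt : e < internalEnergy z := internalEnergy_lt_add_smul hx hy ha hb hρ hm
    have := hg.convexOn.2 hvx hvy ha.le hb.le hab
    rw [hcomb] at this
    have := mul_lt_mul_of_pos_left (log_lt_log he hlt) hz
    simp only [g] at *
    linarith
  · have := hg.2 hvx hvy hv ha hb hab
    rw [hcomb] at this
    have := mul_le_mul_of_nonneg_left (log_le_log he hez) hz.le
    simp only [g] at *
    linarith

lemma qf_eq {γ : ℝ} (hγ : γ ≠ 1) (s₀ : ℝ) {w : ℝ × ℝ × ℝ} (hρ : 0 < w.1)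
    (he : internalEnergy w ≠ 0) :
    qf γ s₀ w =
      (s₀ - log (γ - 1)) * w.1 + (γ * (w.1 * log w.1) - w.1 * log (internalEnergy w)) := by
  have hγ' : γ - 1 ≠ 0 := sub_ne_zero.2 hγ
  rw [qf, entr, press_eq_mul_internalEnergy, log_div (mul_ne_zero hγ' he) (by positivity),
    log_mul hγ' he, log_rpow hρ]
  ring

/-- For `γ > 1` and any constant `s₀ ∈ ℝ`, the function `q(w) = (s₀ − s(w))·ρ`
is strictly convex on the open convex set `D = {(ρ, m, E) : ρ > 0, p(w) > 0}`. -/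
theorem qf_strictConvex (γ s₀ : ℝ) (hγ : 1 < γ) :
    StrictConvexOn ℝ {w : ℝ × ℝ × ℝ | 0 < w.1 ∧ 0 < press γ w} (qf γ s₀) := by
  have hD : {w : ℝ × ℝ × ℝ | 0 < w.1 ∧ 0 < press γ w} =
      {w | 0 < w.1 ∧ 0 < internalEnergy w} := by
    ext w
    simp only [mem_ofPred_eq, press_eq_mul_internalEnergy, mul_pos_iff_of_pos_left (sub_pos.2 hγ)]
  rw [hD]
  have hlin := ((s₀ - log (γ - 1)) • LinearMap.fst ℝ ℝ (ℝ × ℝ)).convexOn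
    (concaveOn_internalEnergy.convex_gt 0)
  refine (hlin.add_strictConvexOn (strictConvexOn_mul_log_sub_mul_log_internalEnergy hγ)).congr ?_
  rintro w ⟨hρ, he⟩
  simp [qf_eq hγ.ne' s₀ hρ he.ne']
end

section
/- For γ > 1, s₀ ∈ ℝ and ε ≥ 0, the set of admissible states Σ^ε = {w = (ρ, m, E) ∈ ℝ³ : ρ ≥ ε, p(w) ≥ ε, q(w) ≤ 0} is a convex subset of ℝ³ whenever ε > 0 (and likewise Σ = {w : ρ > 0, p(w) > 0, q(w) ≤ 0} is convex), as a consequence of the concavity of p and the convexity of q on {ρ > 0, p > 0}. -/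
open Real MeasureTheory

/-!
The pressure is concave on `{ρ > 0}`: it is `(γ - 1)` times `E` minus the kinetic energy
`m² / (2ρ)`, and the kinetic energy is convex, being the perspective of `m ↦ m² / 2`. Where `ρ > 0`, the entropy condition
`p > 0, q ≤ 0` says exactly `e^{s₀} ρ^γ ≤ p`, so `Σ` is a superlevel set of the concave function
`p - e^{s₀} ρ^γ`, and `Σ^ε` is its intersection with a half-space and a superlevel set of `p`.
-/

lemma sq_div_le_convex_comb {a b x₁ x₂ y₁ y₂ : ℝ} (ha : 0 ≤ a) (hb : 0 ≤ b)
    (hy₁ : 0 < y₁) (hy₂ : 0 < y₂) :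
    (a * x₁ + b * x₂) ^ 2 / (a * y₁ + b * y₂) ≤ a * (x₁ ^ 2 / y₁) + b * (x₂ ^ 2 / y₂) := by
  rcases (by positivity : 0 ≤ a * y₁ + b * y₂).eq_or_lt with hD | hD
  · rw [← hD, div_zero]
    positivity
  · rw [mul_div_assoc', mul_div_assoc', div_add_div _ _ hy₁.ne' hy₂.ne',
      div_le_div_iff₀ hD (by positivity)]
    nlinarith [mul_nonneg (mul_nonneg ha hb) (sq_nonneg (x₁ * y₂ - x₂ * y₁)), mul_pos hy₁ hy₂]

lemma convex_setOf_fst_pos {E : Type*} [AddCommGroup E] [Module ℝ E] :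
    Convex ℝ {w : ℝ × E | 0 < w.1} :=
  convex_halfSpace_gt (LinearMap.fst ℝ ℝ E).isLinear 0

lemma concaveOn_press {γ : ℝ} (hγ : 1 ≤ γ) :
    ConcaveOn ℝ {w : ℝ × ℝ × ℝ | 0 < w.1} (press γ) := by
  refine ⟨convex_setOf_fst_pos, ?_⟩
  rintro ⟨ρ₁, m₁, E₁⟩ (hρ₁ : 0 < ρ₁) ⟨ρ₂, m₂, E₂⟩ (hρ₂ : 0 < ρ₂) a b ha hb -
  have hkin := sq_div_le_convex_comb (x₁ := m₁) (x₂ := m₂) ha hb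
    (by positivity : 0 < 2 * ρ₁) (by positivity : 0 < 2 * ρ₂)
  simp only [press, Prod.smul_mk, Prod.mk_add_mk, smul_eq_mul]
  rw [show 2 * (a * ρ₁ + b * ρ₂) = a * (2 * ρ₁) + b * (2 * ρ₂) by ring]
  nlinarith [mul_le_mul_of_nonneg_left hkin (sub_nonneg.2 hγ)]

lemma convexOn_fst_rpow {γ : ℝ} (hγ : 1 ≤ γ) :
    ConvexOn ℝ {w : ℝ × ℝ × ℝ | 0 < w.1} fun w => w.1 ^ γ :=
  ((convexOn_rpow hγ).comp_linearMap (LinearMap.fst ℝ ℝ (ℝ × ℝ))).subset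
    (fun w (hw : 0 < w.1) => show (0 : ℝ) ≤ w.1 from hw.le) convex_setOf_fst_pos

lemma qf_nonpos_iff {γ s₀ : ℝ} {w : ℝ × ℝ × ℝ} (hρ : 0 < w.1) (hp : 0 < press γ w) :
    qf γ s₀ w ≤ 0 ↔ exp s₀ * w.1 ^ γ ≤ press γ w := by
  have hργ : 0 < w.1 ^ γ := rpow_pos_of_pos hρ γ
  have hq : qf γ s₀ w ≤ 0 ↔ s₀ ≤ entr γ w := by
    simpa [qf] using mul_le_mul_iff_left₀ (b := s₀ - entr γ w) (c := 0) hρ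
  rw [hq, entr, le_log_iff_exp_le (div_pos hp hργ), le_div_iff₀ hργ]

lemma press_pos_and_qf_nonpos_iff {γ s₀ : ℝ} {w : ℝ × ℝ × ℝ} (hρ : 0 < w.1) :
    0 < press γ w ∧ qf γ s₀ w ≤ 0 ↔ exp s₀ * w.1 ^ γ ≤ press γ w := by
  refine ⟨fun ⟨hp, hq⟩ => (qf_nonpos_iff hρ hp).1 hq, fun h => ?_⟩
  have hp : 0 < press γ w := lt_of_lt_of_le (by positivity) h
  exact ⟨hp, (qf_nonpos_iff hρ hp).2 h⟩

/-- For `γ > 1`, `s₀ ∈ ℝ` and `ε > 0`, the set of admissible states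
`Σ^ε = {w : ρ ≥ ε, p(w) ≥ ε, q(w) ≤ 0}` is a convex subset of `ℝ³`, and likewise
`Σ = {w : ρ > 0, p(w) > 0, q(w) ≤ 0}` is convex. -/
theorem admissible_set_convex (γ s₀ ε : ℝ) (hγ : 1 < γ) (hε : 0 < ε) :
    Convex ℝ {w : ℝ × ℝ × ℝ | ε ≤ w.1 ∧ ε ≤ press γ w ∧ qf γ s₀ w ≤ 0} ∧
    Convex ℝ {w : ℝ × ℝ × ℝ | 0 < w.1 ∧ 0 < press γ w ∧ qf γ s₀ w ≤ 0} := by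
  have hadm : Convex ℝ {w : ℝ × ℝ × ℝ | 0 < w.1 ∧ 0 < press γ w ∧ qf γ s₀ w ≤ 0} := by
    have := ((concaveOn_press hγ.le).sub
      ((convexOn_fst_rpow hγ.le).smul (exp_pos s₀).le)).convex_ge 0
    convert this using 1
    ext w
    exact and_congr_right fun hρ => (press_pos_and_qf_nonpos_iff hρ).trans sub_nonneg.symm
  refine ⟨?_, hadm⟩
  have hadmε : {w : ℝ × ℝ × ℝ | ε ≤ w.1 ∧ ε ≤ press γ w ∧ qf γ s₀ w ≤ 0} =
      {w | ε ≤ w.1} ∩ {w ∈ {w : ℝ × ℝ × ℝ | 0 < w.1} | ε ≤ press γ w} ∩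
        {w | 0 < w.1 ∧ 0 < press γ w ∧ qf γ s₀ w ≤ 0} := by
    ext w
    simp only [Set.mem_inter_iff, Set.mem_ofPred_eq]
    constructor
    · rintro ⟨hρ, hp, hq⟩
      have hρ' := hε.trans_le hρ
      exact ⟨⟨hρ, hρ', hp⟩, hρ', hε.trans_le hp, hq⟩
    · rintro ⟨⟨hρ, -, hp⟩, -, -, hq⟩
      exact ⟨hρ, hp, hq⟩
  rw [hadmε]
  exact ((convex_halfSpace_ge (LinearMap.fst ℝ ℝ (ℝ × ℝ)).isLinear ε).inter
    ((concaveOn_press hγ.le).convex_ge ε)).inter hadm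
end

section
/- (Discrete mean–deviation bound, Step 3 of the proof of Theorem 1(iii), Lemma attributed to M. Ainsworth.) Let N ≥ 1, let ŵ₁, …, ŵ_N be strictly positive weights with Σ_{α=1}^{N} ŵ_α = 1, let f₁, …, f_N ∈ ℝ, and set f̄ = Σ_{α=1}^{N} ŵ_α f_α. Then max_{1 ≤ α ≤ N} |f̄ − f_α| ≤ C₃ · (f̄ − min_{1 ≤ α ≤ N} f_α), where C₃ = max{ 1, (1 − min_α ŵ_α)/(min_α ŵ_α) }. -/
/-!
Since the weights sum to one, `f̄ - m = ∑ ŵ_β (f_β - m)` for any lower bound `m` of `f`, and all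
terms are nonnegative, so each single term satisfies `ŵ_α (f_α - m) ≤ f̄ - m`. Hence
`f_α - f̄ ≤ (1/ŵ_α - 1)(f̄ - m)` above the mean, while below the mean trivially
`f̄ - f_α ≤ f̄ - m`.
-/

open Finset

section WeightedMean

variable {ι : Type*} [Fintype ι] {w f : ι → ℝ} {m : ℝ}

lemma mul_sub_le_sum_mul_sub (hw : ∀ i, 0 ≤ w i) (hsum : ∑ i, w i = 1) (hm : ∀ i, m ≤ f i)
    (i : ι) : w i * (f i - m) ≤ ∑ j, w j * f j - m := by
  have hmean : ∑ j, w j * f j - m = ∑ j, w j * (f j - m) := by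
    simp only [mul_sub, sum_sub_distrib, ← sum_mul, hsum, one_mul]
  rw [hmean]
  exact single_le_sum (fun j _ => mul_nonneg (hw j) (sub_nonneg.2 (hm j))) (mem_univ i)

lemma abs_sum_mul_sub_le (hw : ∀ i, 0 ≤ w i) (hsum : ∑ i, w i = 1) (hm : ∀ i, m ≤ f i)
    {c : ℝ} (hc : 0 < c) (hcw : ∀ i, c ≤ w i) (i : ι) :
    |∑ j, w j * f j - f i| ≤ max 1 ((1 - c) / c) * (∑ j, w j * f j - m) := by
  set fbar := ∑ j, w j * f j
  have hdev : c * (f i - m) ≤ fbar - m :=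
    (mul_le_mul_of_nonneg_right (hcw i) (sub_nonneg.2 (hm i))).trans
      (mul_sub_le_sum_mul_sub hw hsum hm i)
  have hbar : 0 ≤ fbar - m := (mul_nonneg hc.le (sub_nonneg.2 (hm i))).trans hdev
  rcases le_or_gt (f i) fbar with hle | hlt
  · rw [abs_of_nonneg (sub_nonneg.2 hle)]
    calc fbar - f i ≤ 1 * (fbar - m) := by linarith [hm i]
      _ ≤ _ := mul_le_mul_of_nonneg_right (le_max_left _ _) hbar
  · rw [abs_of_neg (sub_neg.2 hlt)]
    calc -(fbar - f i) ≤ (1 - c) / c * (fbar - m) := by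
          rw [div_mul_eq_mul_div, le_div_iff₀ hc]
          linear_combination hdev
      _ ≤ _ := mul_le_mul_of_nonneg_right (le_max_right _ _) hbar

end WeightedMean

/-- Discrete mean–deviation bound, Step 3 of the proof of Theorem 1(iii),
attributed to M. Ainsworth: For strictly positive weights `ŵ_α` summing to `1` and reals
`f_α` with weighted mean `f̄ = Σ_α ŵ_α f_α`, one has
`max_α |f̄ − f_α| ≤ C₃ · (f̄ − min_α f_α)` where
`C₃ = max{1, (1 − min_α ŵ_α)/(min_α ŵ_α)}`. -/
theorem discrete_mean_deviation_bound (N : ℕ) (hN : 1 ≤ N)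
    (w f : Fin N → ℝ)
    (hw : ∀ α, 0 < w α) (hsum : ∑ α, w α = 1)
    (fbar wmin fmin C₃ : ℝ)
    (hfbar : fbar = ∑ α, w α * f α)
    (hwmin : wmin = sInf (Set.range w))
    (hfmin : fmin = sInf (Set.range f))
    (hC : C₃ = max 1 ((1 - wmin) / wmin)) :
    sSup (Set.range fun α => |fbar - f α|) ≤ C₃ * (fbar - fmin) := by
  have : Nonempty (Fin N) := ⟨⟨0, hN⟩⟩
  have hfmin_le (α) : fmin ≤ f α := hfmin ▸ ciInf_le (Set.finite_range f).bddBelow α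
  have hwmin_le (α) : wmin ≤ w α := hwmin ▸ ciInf_le (Set.finite_range w).bddBelow α
  have hwmin_pos : 0 < wmin := by
    obtain ⟨α, hα⟩ := exists_eq_ciInf_of_finite (f := w)
    rw [hwmin, ← iInf, ← hα]
    exact hw α
  subst hfbar hC
  refine csSup_le (Set.range_nonempty _) ?_
  rintro _ ⟨α, rfl⟩
  exact abs_sum_mul_sub_le (fun i => (hw i).le) hsum hfmin_le hwmin_pos hwmin_le α
end
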